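/- arXiv:1505.02619 — 7 statements merged into one kernel-verified Lean document; each statement's English description precedes it below -/
import Mathlib

section
/- Let x be a vertex of receiver state (H_i, V_i) and y a vertex of a different receiver state (H_k, V_k) over N, and suppose x and y satisfy BC1 or BC2. Then there exists a packet combination P ⊆ N with |P| ≤ 2 that is instantly decodable for both x and y. (Simple P-VACs guarantee proper 2-cliques.) -/
/-- A receiver state over a finite set `N` of packets: a Has set `H ⊆ N` together with
a family `V` of nonempty, pairwise disjoint packet sets (the vertices) whose union is `N \ H`. -/
structure ReceiverState (N : Finset ℕ) where
  H : Finset ℕ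
  V : Finset (Finset ℕ)
  has_subset : H ⊆ N
  vertex_nonempty : ∀ x ∈ V, x.Nonempty
  vertex_disjoint : ∀ x ∈ V, ∀ y ∈ V, x ≠ y → Disjoint x y
  vertex_union : V.sup id = N \ H

/-- `P` is instantly decodable for vertex `x` of receiver state `R`. -/
def InstantlyDecodable {N : Finset ℕ} (R : ReceiverState N) (x P : Finset ℕ) : Prop :=
  P ⊆ x ∪ R.H ∧ (P ∩ x).Nonempty

/-- `P` is aggregating for vertex `x` of receiver state `R`. -/
def Aggregating {N : Finset ℕ} (R : ReceiverState N) (x P : Finset ℕ) : Prop :=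
  ∃ y ∈ R.V, y ≠ x ∧ P ⊆ x ∪ y ∪ R.H ∧ (P ∩ x).Nonempty ∧ (P ∩ y).Nonempty

/-- `P` benefits vertex `x` of receiver state `R`. -/
def Benefits {N : Finset ℕ} (R : ReceiverState N) (x P : Finset ℕ) : Prop :=
  InstantlyDecodable R x P ∨ Aggregating R x P

/-- Condition BC1 between vertices `x` and `y` of two different receiver states. -/
def BC1 (x y : Finset ℕ) : Prop := (x ∩ y).Nonempty

/-- Condition BC2 between vertex `x` of `Ri` and vertex `y` of `Rk`. -/
def BC2 {N : Finset ℕ} (Ri Rk : ReceiverState N) (x y : Finset ℕ) : Prop :=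
  x ∩ y = ∅ ∧ (x ∩ Rk.H).Nonempty ∧ (y ∩ Ri.H).Nonempty

namespace ReceiverState

variable {N : Finset ℕ} (R : ReceiverState N) {x : Finset ℕ}

theorem subset_of_mem_V (hx : x ∈ R.V) : x ⊆ N := by
  have hxN : x ⊆ N \ R.H := R.vertex_union ▸ Finset.le_sup (f := id) hx
  exact hxN.trans Finset.sdiff_subset

theorem instantlyDecodable_singleton {p : ℕ} (hp : p ∈ x) : InstantlyDecodable R x {p} :=
  ⟨Finset.singleton_subset_iff.mpr (Finset.mem_union_left _ hp),
    ⟨p, Finset.mem_inter.mpr ⟨Finset.mem_singleton_self p, hp⟩⟩⟩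

theorem instantlyDecodable_pair {p q : ℕ} (hp : p ∈ x) (hq : q ∈ R.H) :
    InstantlyDecodable R x {p, q} :=
  ⟨Finset.insert_subset (Finset.mem_union_left _ hp)
      (Finset.singleton_subset_iff.mpr (Finset.mem_union_right _ hq)),
    ⟨p, Finset.mem_inter.mpr ⟨Finset.mem_insert_self p _, hp⟩⟩⟩

end ReceiverState

theorem stmt1_general {N : Finset ℕ} (Ri Rk : ReceiverState N)
    (x y : Finset ℕ) (hx : x ∈ Ri.V) (hy : y ∈ Rk.V)
    (h : BC1 x y ∨ BC2 Ri Rk x y) :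
    ∃ P : Finset ℕ, P ⊆ N ∧ P.Nonempty ∧ P.card ≤ 2 ∧
      InstantlyDecodable Ri x P ∧ InstantlyDecodable Rk y P := by
  rcases h with ⟨p, hp⟩ | ⟨-, ⟨p, hp⟩, ⟨q, hq⟩⟩
  · rw [Finset.mem_inter] at hp
    refine ⟨{p}, ?_, Finset.singleton_nonempty p, (Finset.card_singleton p).trans_le one_le_two,
      Ri.instantlyDecodable_singleton hp.1, Rk.instantlyDecodable_singleton hp.2⟩
    exact Finset.singleton_subset_iff.mpr (Ri.subset_of_mem_V hx hp.1)
  · rw [Finset.mem_inter] at hp hq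
    refine ⟨{p, q}, ?_, Finset.insert_nonempty p _, Finset.card_le_two,
      Ri.instantlyDecodable_pair hp.1 hq.2, ?_⟩
    · exact Finset.insert_subset (Ri.subset_of_mem_V hx hp.1)
        (Finset.singleton_subset_iff.mpr (Rk.subset_of_mem_V hy hq.1))
    · rw [Finset.pair_comm]
      exact Rk.instantlyDecodable_pair hq.1 hp.2

/-- Simple P-VACs guarantee proper 2-cliques: if vertices `x` of `Ri` and `y` of `Rk`
(different receiver states) satisfy BC1 or BC2, then some packet combination `P ⊆ N`
with `|P| ≤ 2` is instantly decodable for both. -/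
theorem stmt1 {N : Finset ℕ} (Ri Rk : ReceiverState N) (hR : Ri ≠ Rk)
    (x y : Finset ℕ) (hx : x ∈ Ri.V) (hy : y ∈ Rk.V)
    (h : BC1 x y ∨ BC2 Ri Rk x y) :
    ∃ P : Finset ℕ, P ⊆ N ∧ P.Nonempty ∧ P.card ≤ 2 ∧
      InstantlyDecodable Ri x P ∧ InstantlyDecodable Rk y P :=
  stmt1_general Ri Rk x y hx hy h
end

section
/- Let x be a vertex of receiver state (H_i, V_i), y a vertex of receiver state (H_k, V_k), and z a vertex of receiver state (H_m, V_m), where the three receiver states are pairwise distinct, and suppose x ∩ y ≠ ∅. Then for every p ∈ x ∩ y and every q ∈ z, the packet combination {p, q} benefits all three vertices x, y and z. -/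
namespace ReceiverState

variable {N : Finset ℕ} (R : ReceiverState N)

theorem mem_of_mem_vertex {x : Finset ℕ} (hx : x ∈ R.V) {a : ℕ} (ha : a ∈ x) : a ∈ N := by
  have hle : x ≤ R.V.sup id := Finset.le_sup (f := id) hx
  rw [R.vertex_union] at hle
  exact (Finset.mem_sdiff.mp (hle ha)).1

theorem exists_vertex_mem {b : ℕ} (hb : b ∈ N) (hbH : b ∉ R.H) : ∃ w ∈ R.V, b ∈ w := by
  have hb' : b ∈ R.V.sup id := by
    rw [R.vertex_union]
    exact Finset.mem_sdiff.mpr ⟨hb, hbH⟩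
  simpa using Finset.mem_sup.mp hb'

end ReceiverState

section Pair

variable {N : Finset ℕ} (R : ReceiverState N) {x : Finset ℕ} {a b : ℕ}

theorem instantlyDecodable_pair (ha : a ∈ x) (hb : b ∈ x ∪ R.H) :
    InstantlyDecodable R x {a, b} :=
  ⟨Finset.insert_subset (Finset.mem_union_left _ ha) (Finset.singleton_subset_iff.mpr hb),
    ⟨a, by simp [ha]⟩⟩

theorem aggregating_pair {w : Finset ℕ} (hw : w ∈ R.V) (hwx : w ≠ x) (ha : a ∈ x) (hb : b ∈ w) :
    Aggregating R x {a, b} :=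
  ⟨w, hw, hwx, by grind, ⟨a, by simp [ha]⟩, ⟨b, by simp [hb]⟩⟩

theorem benefits_pair (hx : x ∈ R.V) (ha : a ∈ x) (hb : b ∈ N) : Benefits R x {a, b} := by
  by_cases hbH : b ∈ R.H
  · exact Or.inl (instantlyDecodable_pair R ha (Finset.mem_union_right _ hbH))
  obtain ⟨w, hw, hbw⟩ := R.exists_vertex_mem hb hbH
  by_cases hwx : w = x
  · subst hwx
    exact Or.inl (instantlyDecodable_pair R ha (Finset.mem_union_left _ hbw))
  · exact Or.inr (aggregating_pair R hw hwx ha hbw)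

end Pair

theorem stmt3_general {N : Finset ℕ} (Ri Rk Rm : ReceiverState N)
    (x y z : Finset ℕ) (hx : x ∈ Ri.V) (hy : y ∈ Rk.V) (hz : z ∈ Rm.V) :
    ∀ p ∈ x ∩ y, ∀ q ∈ z,
      Benefits Ri x {p, q} ∧ Benefits Rk y {p, q} ∧ Benefits Rm z {p, q} := by
  intro p hp q hq
  obtain ⟨hpx, hpy⟩ := Finset.mem_inter.mp hp
  have hqN : q ∈ N := Rm.mem_of_mem_vertex hz hq
  refine ⟨benefits_pair Ri hx hpx hqN, benefits_pair Rk hy hpy hqN, ?_⟩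
  rw [Finset.pair_comm]
  exact benefits_pair Rm hz hq (Ri.mem_of_mem_vertex hx hpx)

/-- If `x ∩ y ≠ ∅`, then for any `p ∈ x ∩ y` and `q ∈ z`, the combination `{p, q}`
benefits all three vertices `x`, `y`, `z` of pairwise distinct receiver states. -/
theorem stmt3 {N : Finset ℕ} (Ri Rk Rm : ReceiverState N)
    (hik : Ri ≠ Rk) (him : Ri ≠ Rm) (hkm : Rk ≠ Rm)
    (x y z : Finset ℕ) (hx : x ∈ Ri.V) (hy : y ∈ Rk.V) (hz : z ∈ Rm.V)
    (hxy : (x ∩ y).Nonempty) :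
    ∀ p ∈ x ∩ y, ∀ q ∈ z,
      Benefits Ri x {p, q} ∧ Benefits Rk y {p, q} ∧ Benefits Rm z {p, q} :=
  stmt3_general Ri Rk Rm x y z hx hy hz
end

section
/- There exist a finite set N of packets, five receiver states (H_1, V_1), …, (H_5, V_5) over N, and vertices x_j ∈ V_j for j = 1, …, 5 with x_j ∩ x_l ≠ ∅ for all j ≠ l (i.e., every pair satisfies BC1), such that no packet combination P ⊆ N benefits all five vertices simultaneously. Hence proper K-cliques cannot be guaranteed by BC1 for K ≥ 5. -/
/-!
Take the ten edges of `K₅` as packets and, for each point `j`, the receiver state whose only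
non-singleton vertex is the star of `j` (all other edges being singleton vertices, nothing had).
Two stars share an edge. A combination benefiting the star of `j` has at most one packet outside
it; as every edge lies outside three of the five stars, double counting gives `3 |P| ≤ 5`. So `P`
is a single edge, and that edge misses some star.
-/

open Finset

theorem Benefits.inter_nonempty {N x P : Finset ℕ} {R : ReceiverState N} (h : Benefits R x P) :
    (P ∩ x).Nonempty := by
  rcases h with ⟨-, hPx⟩ | ⟨-, -, -, -, hPx, -⟩ <;> exact hPx

namespace ReceiverState

def ofVertex (N x : Finset ℕ) (hx : x.Nonempty) (hxN : x ⊆ N) : ReceiverState N where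
  H := ∅
  V := insert x ((N \ x).image singleton)
  has_subset := empty_subset N
  vertex_nonempty := by
    simp only [mem_insert, mem_image]
    rintro y (rfl | ⟨p, -, rfl⟩)
    exacts [hx, singleton_nonempty p]
  vertex_disjoint := by
    simp only [mem_insert, mem_image, mem_sdiff]
    rintro y (rfl | ⟨p, ⟨-, hp⟩, rfl⟩) z (rfl | ⟨q, ⟨-, hq⟩, rfl⟩) hyz
    · exact absurd rfl hyz
    · exact disjoint_singleton_right.mpr hq
    · exact disjoint_singleton_left.mpr hp
    · exact disjoint_singleton.mpr fun h => hyz (h ▸ rfl)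
  vertex_union := by
    rw [sup_insert, sup_image, Function.id_comp, sup_singleton_eq_self, id, sdiff_empty,
      sup_eq_union, union_sdiff_of_subset hxN]

variable {N x : Finset ℕ} {hx : x.Nonempty} {hxN : x ⊆ N}

theorem vertex_mem_ofVertex : x ∈ (ofVertex N x hx hxN).V := mem_insert_self _ _

theorem eq_of_ofVertex_eq {y : Finset ℕ} {hy : y.Nonempty} {hyN : y ⊆ N} (hcard : 1 < #x)
    (h : ofVertex N x hx hxN = ofVertex N y hy hyN) : x = y := by
  have hxy : x ∈ (ofVertex N y hy hyN).V := h ▸ vertex_mem_ofVertex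
  obtain rfl | hxy := mem_insert.mp hxy
  · rfl
  obtain ⟨p, -, rfl⟩ := mem_image.mp hxy
  exact absurd hcard (by simp)

theorem card_sdiff_le_one_of_benefits {P : Finset ℕ} (h : Benefits (ofVertex N x hx hxN) x P) :
    #(P \ x) ≤ 1 := by
  rcases h with ⟨hPx, -⟩ | ⟨y, hy, hyx, hPxy, -⟩
  · rw [sdiff_eq_empty_iff_subset.mpr (by simpa [ofVertex] using hPx), card_empty]
    exact zero_le_one
  · obtain rfl | hy := mem_insert.mp hy
    · exact absurd rfl hyx
    obtain ⟨p, -, rfl⟩ := mem_image.mp hy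
    calc #(P \ x) ≤ #{p} := card_le_card (sdiff_le_iff.mpr (by simpa [ofVertex] using hPxy))
      _ = 1 := card_singleton p

end ReceiverState

/-- Packet `i` is the edge `{0, i}` and packet `10 * i + j` the edge `{i, j}` of `K₅`. -/
def incidentEdges : Fin 5 → Finset ℕ
  | 0 => {1, 2, 3, 4}
  | 1 => {1, 12, 13, 14}
  | 2 => {2, 12, 23, 24}
  | 3 => {3, 13, 23, 34}
  | 4 => {4, 14, 24, 34}

def edges : Finset ℕ := univ.sup incidentEdges

theorem incidentEdges_subset_edges (j : Fin 5) : incidentEdges j ⊆ edges := le_sup (mem_univ j)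

theorem one_lt_card_incidentEdges : ∀ j, 1 < #(incidentEdges j) := by decide

theorem incidentEdges_injective : Function.Injective incidentEdges := by
  intro j l
  revert j l
  decide

theorem incidentEdges_inter_nonempty :
    ∀ j l, j ≠ l → (incidentEdges j ∩ incidentEdges l).Nonempty := by
  decide

theorem three_le_card_not_mem_incidentEdges :
    ∀ p ∈ edges, 3 ≤ #{j | p ∉ incidentEdges j} := by
  decide

theorem exists_not_mem_incidentEdges {p : ℕ} (hp : p ∈ edges) : ∃ j, p ∉ incidentEdges j := by
  simpa [filter_nonempty_iff] using
    card_pos.mp ((three_le_card_not_mem_incidentEdges p hp).trans_lt' three_pos)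

def incidentState (j : Fin 5) : ReceiverState edges :=
  .ofVertex edges (incidentEdges j) (card_pos.mp (one_lt_card_incidentEdges j).le)
    (incidentEdges_subset_edges j)

theorem incidentState_injective : Function.Injective incidentState := fun j _ h =>
  incidentEdges_injective (ReceiverState.eq_of_ofVertex_eq (one_lt_card_incidentEdges j) h)

theorem card_le_one_of_benefits_incidentState {P : Finset ℕ} (hP : P ⊆ edges)
    (h : ∀ j, Benefits (incidentState j) (incidentEdges j) P) : #P ≤ 1 := by
  have hcount : #P * 3 ≤ #(univ : Finset (Fin 5)) * 1 :=
    card_mul_le_card_mul (fun p j => p ∉ incidentEdges j)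
      (fun p hp => three_le_card_not_mem_incidentEdges p (hP hp))
      (fun j _ => by
        simpa only [bipartiteBelow, ← sdiff_eq_filter] using
          ReceiverState.card_sdiff_le_one_of_benefits (h j))
  simp only [card_univ, Fintype.card_fin] at hcount
  omega

/-- Second statement of Theorem 1 (negative part): there exist five receiver states and
vertices pairwise satisfying BC1 such that no packet combination benefits all five. -/
theorem stmt6 : ∃ (N : Finset ℕ) (R : Fin 5 → ReceiverState N) (x : Fin 5 → Finset ℕ),
    (∀ j l, j ≠ l → R j ≠ R l) ∧
    (∀ j, x j ∈ (R j).V) ∧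
    (∀ j l, j ≠ l → (x j ∩ x l).Nonempty) ∧
    (∀ P : Finset ℕ, P ⊆ N → P.Nonempty → ¬ ∀ j, Benefits (R j) (x j) P) := by
  refine ⟨edges, incidentState, incidentEdges, fun _ _ => incidentState_injective.ne,
    fun _ => ReceiverState.vertex_mem_ofVertex, incidentEdges_inter_nonempty,
    fun P hP hPne h => ?_⟩
  obtain ⟨p, rfl⟩ := card_eq_one.mp
    (le_antisymm (card_le_one_of_benefits_incidentState hP h) (one_le_card.mpr hPne))
  obtain ⟨j, hj⟩ := exists_not_mem_incidentEdges (hP (mem_singleton_self p))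
  obtain ⟨q, hq⟩ := (h j).inter_nonempty
  rw [mem_inter, mem_singleton] at hq
  exact hj (hq.1 ▸ hq.2)
end

section
/- There exist a finite set N of packets, four receiver states (H_1, V_1), …, (H_4, V_4) over N, and vertices x_j ∈ V_j for j = 1, …, 4 such that every pair of these vertices satisfies BC2, yet no packet combination P ⊆ N benefits all four vertices simultaneously. Hence condition BC2 cannot guarantee proper cliques of size greater than 3. -/
/-!
Index the packets as the off-diagonal entries `a_{jl}` (`j ≠ l`) of a `4 × 4` array. Receiver `k`
has column `k`, wants row `k` as a single vertex, and every other packet is a vertex on its own.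
Row `j` and row `l` meet the Has sets of receivers `l` and `j` in `a_{jl}` and `a_{lj}`, so every
pair of rows satisfies BC2. A combination benefiting row `k` may hold at most one packet outside
row `k` and column `k`, since the other vertices are singletons. If `P` benefits every row, pick
`a_{j,σ j} ∈ P` in each row `j`; then for every `k` at most one `j` has `k ∉ {j, σ j}`, while
double counting the pairs `(j, k)` with `k ∉ {j, σ j}` gives `4 · 2 > 4 · 1`.
-/

open Finset

theorem exists_one_lt_card_filter_ne_of_forall_ne {α : Type*} [Fintype α] [DecidableEq α]
    (hα : 4 ≤ Fintype.card α) (σ : α → α) (hσ : ∀ j, σ j ≠ j) :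
    ∃ k, 1 < #{j | j ≠ k ∧ σ j ≠ k} := by
  by_contra! h
  have hmiss (j : α) :
      univ.bipartiteAbove (fun j k => j ≠ k ∧ σ j ≠ k) j = univ \ {j, σ j} := by
    ext k
    simp [bipartiteAbove, eq_comm]
  have hcount := card_mul_le_card_mul (fun j k => j ≠ k ∧ σ j ≠ k) (m := Fintype.card α - 2)
    (fun j _ => by rw [hmiss, card_univ_sdiff, card_pair (hσ j).symm]) fun k _ => h k
  rw [card_univ] at hcount
  have := Nat.le_of_mul_le_mul_left hcount (by omega)
  omega

namespace Benefits

variable {N : Finset ℕ} {R : ReceiverState N} {x P : Finset ℕ}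

theorem inter_nonempty_s7 (h : Benefits R x P) : (P ∩ x).Nonempty := by
  rcases h with ⟨-, h⟩ | ⟨-, -, -, -, h, -⟩ <;> exact h

theorem card_sdiff_le {m : ℕ} (hV : ∀ y ∈ R.V, y ≠ x → #y ≤ m) (h : Benefits R x P) :
    #(P \ (x ∪ R.H)) ≤ m := by
  rcases h with ⟨hP, -⟩ | ⟨y, hy, hyx, hP, -⟩
  · simp [sdiff_eq_empty_iff_subset.mpr hP]
  · refine (card_le_card fun e he => ?_).trans (hV y hy hyx)
    obtain ⟨heP, hex⟩ := mem_sdiff.mp he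
    have := hP heP
    simp only [mem_union] at this hex
    tauto

end Benefits

namespace BC2Counterexample

def packet (j l : Fin 4) : ℕ := 4 * j + l

theorem packet_inj {j l j' l' : Fin 4} : packet j l = packet j' l' ↔ j = j' ∧ l = l' := by
  refine ⟨fun h => ?_, fun ⟨hj, hl⟩ => hj ▸ hl ▸ rfl⟩
  simp only [packet] at h
  omega

def packets : Finset ℕ := univ.offDiag.image fun p : Fin 4 × Fin 4 => packet p.1 p.2

def row (k : Fin 4) : Finset ℕ := (univ.erase k).image (packet k)

def col (k : Fin 4) : Finset ℕ := (univ.erase k).image (packet · k)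

theorem packet_mem_row {j l k : Fin 4} : packet j l ∈ row k ↔ l ≠ k ∧ j = k := by
  simp [row, packet_inj, eq_comm]

theorem packet_mem_col {j l k : Fin 4} : packet j l ∈ col k ↔ j ≠ k ∧ l = k := by
  simp [col, packet_inj, eq_comm]

theorem disjoint_row {j l : Fin 4} (h : j ≠ l) : Disjoint (row j) (row l) := by
  refine disjoint_left.mpr fun e hj hl => h ?_
  obtain ⟨m, -, rfl⟩ := mem_image.mp hj
  exact (packet_mem_row.mp hl).2

def receiver (k : Fin 4) : ReceiverState packets where
  H := col k
  V := insert (row k) ((univ.erase k).offDiag.image fun p => {packet p.1 p.2})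
  has_subset := by revert k; decide
  vertex_nonempty := by revert k; decide
  vertex_disjoint := by revert k; decide
  vertex_union := by revert k; decide

theorem card_le_one_of_mem_receiver_V {k : Fin 4} {y : Finset ℕ} (hy : y ∈ (receiver k).V)
    (hyk : y ≠ row k) : #y ≤ 1 := by
  simp only [receiver, mem_insert, mem_image] at hy
  obtain hy | ⟨p, -, rfl⟩ := hy
  · exact absurd hy hyk
  · exact (card_singleton _).le

theorem receiver_injective : Function.Injective receiver := by
  intro j l h
  have hcol : col j = col l := congrArg ReceiverState.H h
  by_contra hjl
  exact (packet_mem_col.mp (hcol ▸ packet_mem_col.mpr ⟨Ne.symm hjl, rfl⟩)).1 rfl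

theorem bc2_row {j l : Fin 4} (h : j ≠ l) : BC2 (receiver j) (receiver l) (row j) (row l) :=
  ⟨disjoint_iff_inter_eq_empty.mp (disjoint_row h),
    ⟨packet j l, mem_inter.mpr ⟨packet_mem_row.mpr ⟨h.symm, rfl⟩, packet_mem_col.mpr ⟨h, rfl⟩⟩⟩,
    ⟨packet l j, mem_inter.mpr ⟨packet_mem_row.mpr ⟨h, rfl⟩, packet_mem_col.mpr ⟨h.symm, rfl⟩⟩⟩⟩

theorem exists_packet_mem_of_benefits {P : Finset ℕ} {j : Fin 4}
    (h : Benefits (receiver j) (row j) P) : ∃ l ≠ j, packet j l ∈ P := by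
  obtain ⟨e, he⟩ := h.inter_nonempty_s7
  obtain ⟨heP, he⟩ := mem_inter.mp he
  obtain ⟨l, hl, rfl⟩ := mem_image.mp he
  exact ⟨l, ne_of_mem_erase hl, heP⟩

theorem not_forall_benefits_row (P : Finset ℕ) : ¬ ∀ j, Benefits (receiver j) (row j) P := by
  intro hP
  choose σ hσ hσP using fun j => exists_packet_mem_of_benefits (hP j)
  obtain ⟨k, hk⟩ := exists_one_lt_card_filter_ne_of_forall_ne (by simp) σ hσ
  have hsub : image (fun j => packet j (σ j)) {j | j ≠ k ∧ σ j ≠ k} ⊆ P \ (row k ∪ col k) := by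
    intro e he
    obtain ⟨j, hj, rfl⟩ := mem_image.mp he
    simp only [mem_filter, mem_univ, true_and] at hj
    simp [hσP, packet_mem_row, packet_mem_col, hj]
  have hinj : Set.InjOn (fun j => packet j (σ j)) ({j | j ≠ k ∧ σ j ≠ k} : Finset _) :=
    fun j _ j' _ h => (packet_inj.mp h).1
  have hcard := card_le_card hsub
  rw [card_image_of_injOn hinj] at hcard
  have hle : #(P \ (row k ∪ col k)) ≤ 1 :=
    (hP k).card_sdiff_le fun y hy hyk => card_le_one_of_mem_receiver_V hy hyk
  omega

end BC2Counterexample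

open BC2Counterexample in
/-- There exist four receiver states and vertices, every pair of which satisfies BC2,
such that no packet combination benefits all four simultaneously. -/
theorem stmt7 : ∃ (N : Finset ℕ) (R : Fin 4 → ReceiverState N) (x : Fin 4 → Finset ℕ),
    (∀ j l, j ≠ l → R j ≠ R l) ∧
    (∀ j, x j ∈ (R j).V) ∧
    (∀ j l, j ≠ l → BC2 (R j) (R l) (x j) (x l)) ∧
    (∀ P : Finset ℕ, P ⊆ N → P.Nonempty → ¬ ∀ j, Benefits (R j) (x j) P) := by
  exact ⟨packets, receiver, row, fun _ _ h => receiver_injective.ne h,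
    fun _ => mem_insert_self _ _, fun _ _ h => bc2_row h, fun P _ _ => not_forall_benefits_row P⟩
end

section
/- Let x ⊆ N be a finite set with |x| ≥ 2 and let p, p' be distinct elements of x. Let (H, V) be a receiver state over N and let y ∈ V be a vertex with |x ∩ y| ≥ |x| − 1. Then the packet combination {p, p'} benefits vertex y of receiver state (H, V). (Case 2 in the proof of Theorem 2.) -/
/-! Since at most one packet of `x` lies outside `y`, one of `p`, `p'` is in `y`. The other one
either lies in `y ∪ H`, making `{p, p'}` instantly decodable for `y`, or lies in some other
vertex `z`, making it aggregating for `y` with `z`. -/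

theorem ReceiverState.exists_vertex_mem_s11 {N : Finset ℕ} (R : ReceiverState N) {q : ℕ}
    (hqN : q ∈ N) (hqH : q ∉ R.H) : ∃ z ∈ R.V, q ∈ z := by
  have hq : q ∈ R.V.sup id := by
    rw [R.vertex_union]
    exact Finset.mem_sdiff.2 ⟨hqN, hqH⟩
  simpa only [Finset.mem_sup, id_eq] using hq

theorem mem_or_mem_of_card_sub_one_le_card_inter {α : Type*} [DecidableEq α] {x y : Finset α}
    {p p' : α} (hp : p ∈ x) (hp' : p' ∈ x) (hne : p ≠ p')
    (hcard : x.card - 1 ≤ (x ∩ y).card) : p ∈ y ∨ p' ∈ y := by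
  by_contra! h
  have hpair : ({p, p'} : Finset α) ⊆ x :=
    Finset.insert_subset hp (Finset.singleton_subset_iff.2 hp')
  have hsub : x ∩ y ⊆ x \ {p, p'} := by
    intro a ha
    rw [Finset.mem_inter] at ha
    rw [Finset.mem_sdiff, Finset.mem_insert, Finset.mem_singleton]
    refine ⟨ha.1, ?_⟩
    rintro (rfl | rfl)
    exacts [h.1 ha.2, h.2 ha.2]
  have hsdiff : (x \ {p, p'}).card = x.card - 2 := by
    rw [Finset.card_sdiff_of_subset hpair, Finset.card_pair hne]
  have htwo : 2 ≤ x.card := Finset.card_pair hne ▸ Finset.card_le_card hpair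
  have := Finset.card_le_card hsub
  omega

theorem benefits_pair_of_mem {N : Finset ℕ} (R : ReceiverState N) {y : Finset ℕ} {q q' : ℕ}
    (hqy : q ∈ y) (hq'N : q' ∈ N) : Benefits R y {q, q'} := by
  have hq : ({q, q'} ∩ y).Nonempty := ⟨q, by simp [hqy]⟩
  by_cases hq' : q' ∈ y ∪ R.H
  · exact Or.inl
      ⟨Finset.insert_subset (Finset.mem_union_left _ hqy) (Finset.singleton_subset_iff.2 hq'), hq⟩
  · rw [Finset.mem_union, not_or] at hq'
    obtain ⟨z, hz, hq'z⟩ := R.exists_vertex_mem_s11 hq'N hq'.2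
    right
    refine ⟨z, hz, ?_, ?_, hq, ⟨q', by simp [hq'z]⟩⟩
    · rintro rfl
      exact hq'.1 hq'z
    · intro a ha
      rw [Finset.mem_insert, Finset.mem_singleton] at ha
      rcases ha with rfl | rfl <;> simp [hqy, hq'z]

theorem stmt11_general {N : Finset ℕ} (R : ReceiverState N)
    (x : Finset ℕ) (hxN : x ⊆ N)
    (p p' : ℕ) (hp : p ∈ x) (hp' : p' ∈ x) (hne : p ≠ p')
    (y : Finset ℕ) (hcard : x.card - 1 ≤ (x ∩ y).card) :
    Benefits R y {p, p'} := by
  rcases mem_or_mem_of_card_sub_one_le_card_inter hp hp' hne hcard with hpy | hp'y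
  · exact benefits_pair_of_mem R hpy (hxN hp')
  · rw [Finset.pair_comm]
    exact benefits_pair_of_mem R hp'y (hxN hp)

/-- Case 2 in the proof of Theorem 2: if `|x| ≥ 2`, `p ≠ p'` are elements of `x`, and
`y` is a vertex with `|x ∩ y| ≥ |x| - 1`, then `{p, p'}` benefits `y`. -/
theorem stmt11 {N : Finset ℕ} (R : ReceiverState N)
    (x : Finset ℕ) (hxN : x ⊆ N) (hx2 : 2 ≤ x.card)
    (p p' : ℕ) (hp : p ∈ x) (hp' : p' ∈ x) (hne : p ≠ p')
    (y : Finset ℕ) (hy : y ∈ R.V) (hcard : x.card - 1 ≤ (x ∩ y).card) :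
    Benefits R y {p, p'} :=
  stmt11_general R x hxN p p' hp hp' hne y hcard
end

section
/- Let v_{i_1, j_1}, …, v_{i_K, j_K} be IDNC vertices of pairwise distinct receivers such that every pair of them satisfies C1 or C2. Then the set S = {j_1, …, j_K} of their wanted packets is instantly decodable for every vertex: for each k, j_k ∈ S and S \ {j_k} ⊆ H_{i_k}. (Sufficiency of the IDNC pairwise vertex adjacency conditions for clique decodability.) -/
theorem Finset.image_univ_sdiff_singleton_subset_iff {α β : Type*} [Fintype α] [DecidableEq β]
    (f : α → β) (a : α) (s : Finset β) :
    Finset.image f Finset.univ \ {f a} ⊆ s ↔ ∀ b, f b ≠ f a → f b ∈ s := by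
  simp only [Finset.subset_iff, Finset.mem_sdiff, Finset.mem_image, Finset.mem_univ, true_and,
    Finset.mem_singleton, and_imp, forall_exists_index, forall_apply_eq_imp_iff]

theorem stmt15_general {ι : Type*} {K : ℕ}
    (H : ι → Finset ℕ) (i : Fin K → ι) (j : Fin K → ℕ)
    (hC : ∀ k l, k ≠ l → j k = j l ∨ (j k ∈ H (i l) ∧ j l ∈ H (i k))) :
    ∀ k, j k ∈ Finset.image j Finset.univ ∧
      Finset.image j Finset.univ \ {j k} ⊆ H (i k) := by
  intro k
  refine ⟨Finset.mem_image_of_mem j (Finset.mem_univ k),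
    (Finset.image_univ_sdiff_singleton_subset_iff j k _).2 fun l hne => ?_⟩
  exact ((hC l k (ne_of_apply_ne j hne)).resolve_left hne).1

/-- Sufficiency of the IDNC pairwise vertex adjacency conditions for clique
decodability: if IDNC vertices `(i k, j k)` of pairwise distinct receivers pairwise
satisfy C1 or C2, then the set `S` of their wanted packets is instantly decodable for
every one of them. -/
theorem stmt15 {N : Finset ℕ} {ι : Type*} {K : ℕ}
    (H : ι → Finset ℕ) (hH : ∀ r, H r ⊆ N)
    (i : Fin K → ι) (hi : Function.Injective i)
    (j : Fin K → ℕ) (hj : ∀ k, j k ∈ N \ H (i k))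
    (hC : ∀ k l, k ≠ l → j k = j l ∨ (j k ∈ H (i l) ∧ j l ∈ H (i k))) :
    ∀ k, j k ∈ Finset.image j Finset.univ ∧
      Finset.image j Finset.univ \ {j k} ⊆ H (i k) :=
  stmt15_general H i j hC
end

section
/- Let v_{i_1, j_1}, …, v_{i_K, j_K} be IDNC vertices of pairwise distinct receivers, and suppose there exists a set S ⊆ N that is instantly decodable for every one of these vertices, i.e., for each k, j_k ∈ S and S \ {j_k} ⊆ H_{i_k}. Then every pair of these vertices satisfies C1 or C2. (Necessity of the IDNC pairwise vertex adjacency conditions for clique decodability.) -/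
theorem Finset.mem_of_mem_of_sdiff_singleton_subset {α : Type*} [DecidableEq α]
    {S T : Finset α} {a b : α} (ha : a ∈ S) (hS : S \ {b} ⊆ T) (hab : a ≠ b) : a ∈ T :=
  hS (Finset.mem_sdiff.mpr ⟨ha, Finset.notMem_singleton.mpr hab⟩)

theorem stmt16_general {ι : Type*} {K : ℕ}
    (H : ι → Finset ℕ) (i : Fin K → ι) (j : Fin K → ℕ) (S : Finset ℕ)
    (hS : ∀ k, j k ∈ S ∧ S \ {j k} ⊆ H (i k)) :
    ∀ k l, k ≠ l → j k = j l ∨ (j k ∈ H (i l) ∧ j l ∈ H (i k)) := by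
  intro k l _
  refine or_iff_not_imp_left.mpr fun hkl => ⟨?_, ?_⟩
  · exact Finset.mem_of_mem_of_sdiff_singleton_subset (hS k).1 (hS l).2 hkl
  · exact Finset.mem_of_mem_of_sdiff_singleton_subset (hS l).1 (hS k).2 (Ne.symm hkl)

/-- Necessity of the IDNC pairwise vertex adjacency conditions for clique
decodability: if some set `S ⊆ N` is instantly decodable for every one of the IDNC
vertices `(i k, j k)` of pairwise distinct receivers, then every pair of these vertices
satisfies C1 or C2. -/
theorem stmt16 {N : Finset ℕ} {ι : Type*} {K : ℕ}
    (H : ι → Finset ℕ) (hH : ∀ r, H r ⊆ N)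
    (i : Fin K → ι) (hi : Function.Injective i)
    (j : Fin K → ℕ) (hj : ∀ k, j k ∈ N \ H (i k))
    (S : Finset ℕ) (hSN : S ⊆ N)
    (hS : ∀ k, j k ∈ S ∧ S \ {j k} ⊆ H (i k)) :
    ∀ k l, k ≠ l → j k = j l ∨ (j k ∈ H (i l) ∧ j l ∈ H (i k)) :=
  stmt16_general H i j S hS
end
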